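/- arXiv:2002.12293 — 6 statements merged into one kernel-verified Lean document; each statement's English description precedes it below -/
import Mathlib

section
/- For every point p = (x,y,z) ∈ ℝ³, the Lie brackets of X and Y satisfy [X,Y](p) = (0, 0, B(x,y)) and [X,[X,Y]](p) = (0, 0, 2θ(1−y)). -/
lemma dir1 (f : ℝ × ℝ × ℝ → ℝ) (x y z : ℝ)
    (hf : DifferentiableAt ℝ f (x, y, z)) :
    fderiv ℝ f (x, y, z) (1, 0, 0) = deriv (fun t => f (t, y, z)) x := by
  have hc : HasDerivAt (fun t : ℝ => ((t, y, z) : ℝ × ℝ × ℝ)) (1, 0, 0) x := by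
    exact HasDerivAt.prodMk (hasDerivAt_id x) (hasDerivAt_const x ((y, z) : ℝ × ℝ))
  exact (hf.hasFDerivAt.comp_hasDerivAt x hc).deriv.symm

/-- With `A (x,y) = x θ(y) + x² θ(1−y)` and `B (x,y) = θ(y) + 2x θ(1−y)`, the
vector fields `X (x,y,z) = (1,0,0)` and `Y (x,y,z) = (0,1,A(x,y))` on `ℝ³` satisfy
`[X,Y] (x,y,z) = (0,0,B(x,y))` and `[X,[X,Y]] (x,y,z) = (0,0,2 θ(1−y))`,
where the Lie bracket is `[F,G](p) = DG(p) F(p) − DF(p) G(p)`. -/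
theorem stmt_2 (θ : ℝ → ℝ) (hθ : ContDiff ℝ (⊤ : ℕ∞) θ) (hmono : Monotone θ)
    (hθ0 : ∀ t ≤ (0 : ℝ), θ t = 0) (hθpos : ∀ t > (0 : ℝ), 0 < θ t)
    (hθ1 : ∀ t ≥ (1 : ℝ), θ t = 1)
    (A B : ℝ → ℝ → ℝ)
    (hA : ∀ x y : ℝ, A x y = x * θ y + x ^ 2 * θ (1 - y))
    (hB : ∀ x y : ℝ, B x y = θ y + 2 * x * θ (1 - y))
    (X Y XY : ℝ × ℝ × ℝ → ℝ × ℝ × ℝ)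
    (hX : ∀ p : ℝ × ℝ × ℝ, X p = (1, 0, 0))
    (hY : ∀ p : ℝ × ℝ × ℝ, Y p = (0, 1, A p.1 p.2.1))
    (hXY : ∀ p : ℝ × ℝ × ℝ, XY p = fderiv ℝ Y p (X p) - fderiv ℝ X p (Y p))
    (p : ℝ × ℝ × ℝ) :
    XY p = (0, 0, B p.1 p.2.1) ∧
    fderiv ℝ XY p (X p) - fderiv ℝ X p (XY p) = (0, 0, 2 * θ (1 - p.2.1)) := by
  have hθd : Differentiable ℝ θ := hθ.differentiable (by simp)
  set g : ℝ × ℝ × ℝ → ℝ := fun q => q.1 * θ q.2.1 + q.1 ^ 2 * θ (1 - q.2.1) with hgdef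
  set h : ℝ × ℝ × ℝ → ℝ := fun q => θ q.2.1 + 2 * q.1 * θ (1 - q.2.1) with hhdef
  have hg : Differentiable ℝ g := by fun_prop
  have hh : Differentiable ℝ h := by fun_prop
  have hYf : Y = fun q : ℝ × ℝ × ℝ => ((0 : ℝ), (1 : ℝ), g q) := by
    funext q; rw [hY, hA]
  have hXf : X = fun _ : ℝ × ℝ × ℝ => ((1 : ℝ), (0 : ℝ), (0 : ℝ)) := funext hX
  have hfX : ∀ q : ℝ × ℝ × ℝ, fderiv ℝ X q = 0 := by
    intro q; rw [hXf]; exact fderiv_const_apply _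
  have key : ∀ q : ℝ × ℝ × ℝ, XY q = (0, 0, h q) := by
    rintro ⟨x, y, z⟩
    have hY' : HasFDerivAt Y
        ((0 : ℝ × ℝ × ℝ →L[ℝ] ℝ).prod ((0 : ℝ × ℝ × ℝ →L[ℝ] ℝ).prod
          (fderiv ℝ g (x, y, z)))) (x, y, z) := by
      rw [hYf]
      exact HasFDerivAt.prodMk (hasFDerivAt_const _ _)
        (HasFDerivAt.prodMk (hasFDerivAt_const _ _) (hg (x, y, z)).hasFDerivAt)
    have hdir : fderiv ℝ g (x, y, z) (1, 0, 0) = h (x, y, z) := by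
      rw [dir1 g x y z (hg _)]
      have hd : HasDerivAt (fun t : ℝ => t * θ y + t ^ 2 * θ (1 - y))
          (θ y + 2 * x * θ (1 - y)) x := by
        have h1 := (hasDerivAt_id x).mul_const (θ y)
        have h2 := (hasDerivAt_pow 2 x).mul_const (θ (1 - y))
        have h3 := h1.add h2
        exact h3.congr_deriv (by ring)
      exact hd.deriv
    rw [hXY, hfX, hX, hY'.fderiv]
    have hdir' := hdir
    simp only [Prod.mk_zero_zero] at hdir'
    simp [hdir']
    exact hdir'
  have hXYf : XY = fun q : ℝ × ℝ × ℝ => ((0 : ℝ), (0 : ℝ), h q) := funext key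
  constructor
  · rw [key, hB]
  · obtain ⟨x, y, z⟩ := p
    have hXY' : HasFDerivAt XY
        ((0 : ℝ × ℝ × ℝ →L[ℝ] ℝ).prod ((0 : ℝ × ℝ × ℝ →L[ℝ] ℝ).prod
          (fderiv ℝ h (x, y, z)))) (x, y, z) := by
      rw [hXYf]
      exact HasFDerivAt.prodMk (hasFDerivAt_const _ _)
        (HasFDerivAt.prodMk (hasFDerivAt_const _ _) (hh (x, y, z)).hasFDerivAt)
    have hdir : fderiv ℝ h (x, y, z) (1, 0, 0) = 2 * θ (1 - y) := by
      rw [dir1 h x y z (hh _)]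
      have hd : HasDerivAt (fun t : ℝ => θ y + 2 * t * θ (1 - y))
          (2 * θ (1 - y)) x := by
        have h1 := (hasDerivAt_const x (θ y)).add
          (((hasDerivAt_id x).const_mul 2).mul_const (θ (1 - y)))
        exact h1.congr_deriv (by ring)
      exact hd.deriv
    rw [hfX, hX, hXY'.fderiv]
    simp only [Prod.mk_zero_zero] at hdir
    simp [hdir]
    exact hdir
end

section
/- For every (x,y,z) ∈ ℝ³, the linear span over ℝ of the four vectors (1,0,0), (0,1,A(x,y)), (0,0,B(x,y)), and (0,0,2θ(1−y)) is all of ℝ³. In other words, the distribution spanned by X and Y is bracket-generating: at every point, X, Y, [X,Y] and [X,[X,Y]] span the full tangent space. -/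
/-- At every point `(x,y,z) ∈ ℝ³`, the vectors `X = (1,0,0)`, `Y = (0,1,A(x,y))`,
`[X,Y] = (0,0,B(x,y))` and `[X,[X,Y]] = (0,0,2θ(1−y))` span all of `ℝ³`:
the distribution is bracket-generating. -/
theorem stmt_3 (θ : ℝ → ℝ) (hθ : ContDiff ℝ (⊤ : ℕ∞) θ) (hmono : Monotone θ)
    (hθ0 : ∀ t ≤ (0 : ℝ), θ t = 0) (hθpos : ∀ t > (0 : ℝ), 0 < θ t)
    (hθ1 : ∀ t ≥ (1 : ℝ), θ t = 1)
    (A B : ℝ → ℝ → ℝ)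
    (hA : ∀ x y : ℝ, A x y = x * θ y + x ^ 2 * θ (1 - y))
    (hB : ∀ x y : ℝ, B x y = θ y + 2 * x * θ (1 - y)) :
    ∀ x y z : ℝ,
      Submodule.span ℝ
        ({((1 : ℝ), (0 : ℝ), (0 : ℝ)), (0, 1, A x y), (0, 0, B x y),
          (0, 0, 2 * θ (1 - y))} : Set (ℝ × ℝ × ℝ)) = ⊤ := by
  intro x y z
  set S : Set (ℝ × ℝ × ℝ) :=
    ({((1 : ℝ), (0 : ℝ), (0 : ℝ)), (0, 1, A x y), (0, 0, B x y),
      (0, 0, 2 * θ (1 - y))} : Set (ℝ × ℝ × ℝ))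
  have h1 : ((1 : ℝ), (0 : ℝ), (0 : ℝ)) ∈ Submodule.span ℝ S :=
    Submodule.subset_span (by simp [S])
  have hY : ((0 : ℝ), (1 : ℝ), A x y) ∈ Submodule.span ℝ S :=
    Submodule.subset_span (by simp [S])
  have h3 : ((0 : ℝ), (0 : ℝ), (1 : ℝ)) ∈ Submodule.span ℝ S := by
    by_cases hy : y < 1
    · have hc : 2 * θ (1 - y) ≠ 0 := by
        have := hθpos (1 - y) (by linarith)
        positivity
      have hmem : ((0 : ℝ), (0 : ℝ), 2 * θ (1 - y)) ∈ Submodule.span ℝ S :=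
        Submodule.subset_span (by simp [S])
      have := Submodule.smul_mem _ (2 * θ (1 - y))⁻¹ hmem
      simpa only [Prod.smul_mk, smul_eq_mul, mul_zero, inv_mul_cancel₀ hc] using this
    · have hc : B x y = 1 := by
        rw [hB, hθ1 y (by linarith), hθ0 (1 - y) (by linarith)]; ring
      have hmem : ((0 : ℝ), (0 : ℝ), B x y) ∈ Submodule.span ℝ S :=
        Submodule.subset_span (by simp [S])
      rwa [hc] at hmem
  have h2 : ((0 : ℝ), (1 : ℝ), (0 : ℝ)) ∈ Submodule.span ℝ S := by
    have := Submodule.sub_mem _ hY (Submodule.smul_mem _ (A x y) h3)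
    simpa using this
  rw [eq_top_iff]
  rintro ⟨a, b, c⟩ -
  have : (a, b, c) = a • ((1 : ℝ), (0 : ℝ), (0 : ℝ)) + b • ((0 : ℝ), (1 : ℝ), (0 : ℝ))
      + c • ((0 : ℝ), (0 : ℝ), (1 : ℝ)) := by
    simp [Prod.ext_iff]
  rw [this]
  exact Submodule.add_mem _ (Submodule.add_mem _ (Submodule.smul_mem _ _ h1)
    (Submodule.smul_mem _ _ h2)) (Submodule.smul_mem _ _ h3)
end

section
/- For every (x,y) ∈ ℝ² with B(x,y) = 0, one has y < 1, θ(1−y) > 0, and the Fréchet derivative of B at (x,y) is nonzero (indeed its partial derivative in x equals 2θ(1−y) ≠ 0). Consequently 0 is a regular value of B, and the Martinet surface Σ = {(x,y,z) ∈ ℝ³ : B(x,y) = 0} is a smooth surface. -/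
/-- For every `(x,y)` with `B (x,y) = 0`, one has `y < 1`, `θ(1−y) > 0`, the partial
derivative of `B` in `x` at `(x,y)` equals `2 θ(1−y)`, and the Fréchet derivative of `B`
at `(x,y)` is nonzero. Hence `0` is a regular value of `B` and the Martinet surface
`Σ = {B = 0}` is a smooth surface. -/
theorem stmt_4 (θ : ℝ → ℝ) (hθ : ContDiff ℝ (⊤ : ℕ∞) θ) (hmono : Monotone θ)
    (hθ0 : ∀ t ≤ (0 : ℝ), θ t = 0) (hθpos : ∀ t > (0 : ℝ), 0 < θ t)
    (hθ1 : ∀ t ≥ (1 : ℝ), θ t = 1)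
    (B : ℝ × ℝ → ℝ)
    (hB : ∀ p : ℝ × ℝ, B p = θ p.2 + 2 * p.1 * θ (1 - p.2)) :
    ∀ p : ℝ × ℝ, B p = 0 →
      p.2 < 1 ∧ 0 < θ (1 - p.2) ∧
      fderiv ℝ B p (1, 0) = 2 * θ (1 - p.2) ∧
      fderiv ℝ B p ≠ 0 := by
  intro p hp
  have hθd : Differentiable ℝ θ := hθ.differentiable (by simp)
  have hy : p.2 < 1 := by
    by_contra h
    push_neg at h
    have h1 : θ p.2 = 1 := hθ1 _ h
    have h2 : θ (1 - p.2) = 0 := hθ0 _ (by linarith)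
    rw [hB p, h1, h2] at hp
    linarith
  have hpos : 0 < θ (1 - p.2) := hθpos _ (by linarith)
  have hBfun : B = fun q : ℝ × ℝ => θ q.2 + 2 * q.1 * θ (1 - q.2) := funext hB
  have h2 : HasFDerivAt (fun q : ℝ × ℝ => θ q.2)
      (deriv θ p.2 • ContinuousLinearMap.snd ℝ ℝ ℝ) p :=
    (hθd p.2).hasDerivAt.comp_hasFDerivAt p (hasFDerivAt_snd)
  have h3 : HasFDerivAt (fun q : ℝ × ℝ => 1 - q.2)
      (0 - ContinuousLinearMap.snd ℝ ℝ ℝ) p :=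
    (hasFDerivAt_const (1:ℝ) p).sub hasFDerivAt_snd
  have h4 : HasFDerivAt (fun q : ℝ × ℝ => θ (1 - q.2))
      (deriv θ (1 - p.2) • (0 - ContinuousLinearMap.snd ℝ ℝ ℝ)) p :=
    (hθd (1 - p.2)).hasDerivAt.comp_hasFDerivAt p h3
  have h5 : HasFDerivAt (fun q : ℝ × ℝ => 2 * q.1)
      ((2:ℝ) • ContinuousLinearMap.fst ℝ ℝ ℝ) p :=
    ((hasFDerivAt_fst : HasFDerivAt Prod.fst (ContinuousLinearMap.fst ℝ ℝ ℝ) p).const_mul 2)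
  have h6 := h5.mul h4
  have h7 := h2.add h6
  constructor
  · exact hy
  constructor
  · exact hpos
  have hval : fderiv ℝ B p (1, 0) = 2 * θ (1 - p.2) := by
    rw [hBfun, (show HasFDerivAt (fun q : ℝ × ℝ => θ q.2 + 2 * q.1 * θ (1 - q.2)) _ p from h7).fderiv]
    simp
    ring
  exact ⟨hval, fun h0 => by rw [h0] at hval; simp at hval; linarith⟩
end

section
/- For every α ∈ ℝ, the curve μ_α : ℝ → ℝ⁶ defined by μ_α(t) = (0, t, 0, 0, 0, α) satisfies, for every t ≤ 0: (i) h_X(μ_α(t)) = 0 and h_Y(μ_α(t)) = 0, where h_X(x,y,z,p_x,p_y,p_z) = p_x and h_Y(x,y,z,p_x,p_y,p_z) = p_y + A(x,y)p_z; and (ii) μ_α'(t) = W(μ_α(t)), where W : ℝ⁶ → ℝ⁶ is the Hamiltonian vector field of h_Y, given by W(x,y,z,p_x,p_y,p_z) = (0, 1, A(x,y), −p_z·∂_xA(x,y), −p_z·∂_yA(x,y), 0). In particular, for α ≠ 0, μ_α is a nowhere-vanishing abnormal lift of the path γ(t) = (0,t,0) restricted to t ≤ 0, with control u = (0,1). 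-/
/-- For every `α ∈ ℝ`, the curve `μ_α(t) = (0, t, 0, 0, 0, α)` satisfies, for `t ≤ 0`:
(i) `h_X (μ_α t) = 0` and `h_Y (μ_α t) = 0`, where `h_X = p_x` and `h_Y = p_y + A(x,y) p_z`;
(ii) `μ_α'(t) = W (μ_α t)`, where `W` is the Hamiltonian vector field of `h_Y`.
In particular, for `α ≠ 0`, `μ_α` is a nowhere-vanishing abnormal lift of the path
`γ(t) = (0,t,0)`, `t ≤ 0`, with control `u = (0,1)`. -/
theorem stmt_7 (θ : ℝ → ℝ) (hθ : ContDiff ℝ (⊤ : ℕ∞) θ) (hmono : Monotone θ)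
    (hθ0 : ∀ t ≤ (0 : ℝ), θ t = 0) (hθpos : ∀ t > (0 : ℝ), 0 < θ t)
    (hθ1 : ∀ t ≥ (1 : ℝ), θ t = 1)
    (A : ℝ → ℝ → ℝ)
    (hA : ∀ x y : ℝ, A x y = x * θ y + x ^ 2 * θ (1 - y))
    (hX hY : (Fin 6 → ℝ) → ℝ)
    (hhX : ∀ p : Fin 6 → ℝ, hX p = p 3)
    (hhY : ∀ p : Fin 6 → ℝ, hY p = p 4 + A (p 0) (p 1) * p 5)
    (W : (Fin 6 → ℝ) → Fin 6 → ℝ)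
    (hW : ∀ p : Fin 6 → ℝ, W p =
      ![0,
        1,
        A (p 0) (p 1),
        -(p 5) * (θ (p 1) + 2 * p 0 * θ (1 - p 1)),
        -(p 5) * (p 0 * deriv θ (p 1) - (p 0) ^ 2 * deriv θ (1 - p 1)),
        0])
    (α : ℝ) (μ : ℝ → Fin 6 → ℝ)
    (hμ : ∀ t : ℝ, μ t = ![0, t, 0, 0, 0, α]) :
    (∀ t ≤ (0 : ℝ), hX (μ t) = 0 ∧ hY (μ t) = 0 ∧ HasDerivAt μ (W (μ t)) t) ∧
    (α ≠ 0 → ∀ t ≤ (0 : ℝ), μ t ≠ 0) := by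
  have hA0 : ∀ y : ℝ, A 0 y = 0 := by
    intro y; rw [hA]; ring
  constructor
  · intro t ht
    refine ⟨?_, ?_, ?_⟩
    · rw [hhX, hμ]; simp
    · rw [hhY, hμ]; simp [hA0]
    · have hθt : θ t = 0 := hθ0 t ht
      have hWμ : W (μ t) = ![0, 1, 0, 0, 0, 0] := by
        rw [hW, hμ]
        simp [hA0, hθt]
      rw [hWμ]
      have hμe : μ = fun t => ![0, t, 0, 0, 0, α] := funext hμ
      rw [hμe, hasDerivAt_pi]
      intro i
      fin_cases i <;> simp <;>
        first
        | exact hasDerivAt_const _ _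
        | exact hasDerivAt_id _
  · intro hα t ht h
    have := congrFun h 5
    rw [hμ] at this
    simp at this
    exact hα this
end

section
/- Let T > 0 and let λ : ℝ → ℝ⁶ be a differentiable curve satisfying λ'(t) = V(λ(t)) for all t ∈ ℝ and λ(0) = (0, −T, 0, 0, 1, 0). Then λ(t) = (0, t − T, 0, 0, 1, 0) for all t ∈ ℝ; i.e., the normal geodesic flow starting from the covector (0,1,0) at the point (0,−T,0) is exactly the straight line along the y-axis. -/
private lemma const_of_hasDerivAt_zero {f : ℝ → ℝ} (h : ∀ t : ℝ, HasDerivAt f 0 t)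
    (t : ℝ) : f t = f 0 :=
  is_const_of_deriv_eq_zero (fun x => (h x).differentiableAt)
    (fun x => (h x).deriv) t 0

/-- For `T > 0`, the integral curve of the Hamiltonian vector field `V` starting at
`(0, −T, 0, 0, 1, 0)` is exactly `λ(t) = (0, t − T, 0, 0, 1, 0)`: the normal geodesic
flow from the covector `(0,1,0)` at the point `(0,−T,0)` is the straight line along
the `y`-axis. -/
theorem stmt_9 (θ : ℝ → ℝ) (hθ : ContDiff ℝ (⊤ : ℕ∞) θ) (hmono : Monotone θ)
    (hθ0 : ∀ t ≤ (0 : ℝ), θ t = 0) (hθpos : ∀ t > (0 : ℝ), 0 < θ t)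
    (hθ1 : ∀ t ≥ (1 : ℝ), θ t = 1)
    (A B : ℝ → ℝ → ℝ)
    (hA : ∀ x y : ℝ, A x y = x * θ y + x ^ 2 * θ (1 - y))
    (hB : ∀ x y : ℝ, B x y = θ y + 2 * x * θ (1 - y))
    (V : (Fin 6 → ℝ) → Fin 6 → ℝ)
    (hV : ∀ p : Fin 6 → ℝ, V p =
      ![p 3,
        p 4 + A (p 0) (p 1) * p 5,
        (p 4 + A (p 0) (p 1) * p 5) * A (p 0) (p 1),
        -(p 5) * (p 4 + A (p 0) (p 1) * p 5) * B (p 0) (p 1),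
        -(p 5) * (p 4 + A (p 0) (p 1) * p 5) *
          (p 0 * deriv θ (p 1) - (p 0) ^ 2 * deriv θ (1 - p 1)),
        0])
    (T : ℝ) (hT : 0 < T)
    (lam : ℝ → Fin 6 → ℝ)
    (hlam : ∀ t : ℝ, HasDerivAt lam (V (lam t)) t)
    (hlam0 : lam 0 = ![0, -T, 0, 0, 1, 0]) :
    ∀ t : ℝ, lam t = ![0, t - T, 0, 0, 1, 0] := by
  have hd : ∀ (i : Fin 6) (t : ℝ), HasDerivAt (fun s => lam s i) ((V (lam t)) i) t := by
    intro i t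
    exact (hasDerivAt_pi.mp (hlam t)) i
  -- component 5
  have h5 : ∀ t : ℝ, lam t 5 = 0 := by
    intro t
    have : ∀ s : ℝ, HasDerivAt (fun u => lam u 5) 0 s := by
      intro s
      have := hd 5 s
      rw [hV] at this
      simpa using this
    have := const_of_hasDerivAt_zero this t
    rw [this, hlam0]; rfl
  -- component 4
  have h4 : ∀ t : ℝ, lam t 4 = 1 := by
    intro t
    have : ∀ s : ℝ, HasDerivAt (fun u => lam u 4) 0 s := by
      intro s
      have := hd 4 s
      rw [hV] at this
      simpa [h5 s] using this
    have := const_of_hasDerivAt_zero this t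
    rw [this, hlam0]; simp [Matrix.cons_val_succ]
  -- component 3
  have h3 : ∀ t : ℝ, lam t 3 = 0 := by
    intro t
    have : ∀ s : ℝ, HasDerivAt (fun u => lam u 3) 0 s := by
      intro s
      have := hd 3 s
      rw [hV] at this
      simpa [h5 s] using this
    have := const_of_hasDerivAt_zero this t
    rw [this, hlam0]; simp [Matrix.cons_val_succ]
  -- component 0
  have h0 : ∀ t : ℝ, lam t 0 = 0 := by
    intro t
    have : ∀ s : ℝ, HasDerivAt (fun u => lam u 0) 0 s := by
      intro s
      have := hd 0 s
      rw [hV] at this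
      simpa [h3 s] using this
    have := const_of_hasDerivAt_zero this t
    rw [this, hlam0]; simp [Matrix.cons_val_succ]
  have hA0 : ∀ y : ℝ, A 0 y = 0 := by intro y; simp [hA]
  -- component 1
  have h1 : ∀ t : ℝ, lam t 1 = t - T := by
    intro t
    have : ∀ s : ℝ, HasDerivAt (fun u => lam u 1 - u) 0 s := by
      intro s
      have hD := hd 1 s
      rw [hV] at hD
      have hD' : HasDerivAt (fun u => lam u 1) 1 s := by
        simpa [h5 s, h4 s] using hD
      have h := hD'.sub (hasDerivAt_id' s)
      rw [sub_self] at h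
      exact h
    have := const_of_hasDerivAt_zero this t
    have h0' : lam 0 1 = -T := by rw [hlam0]; simp
    simp only [h0'] at this
    linarith [this]
  -- component 2
  have h2 : ∀ t : ℝ, lam t 2 = 0 := by
    intro t
    have : ∀ s : ℝ, HasDerivAt (fun u => lam u 2) 0 s := by
      intro s
      have := hd 2 s
      rw [hV] at this
      simpa [h0 s, hA0] using this
    have := const_of_hasDerivAt_zero this t
    rw [this, hlam0]; simp [Matrix.cons_val_succ]
  intro t
  funext i
  fin_cases i <;> simp [h0 t, h1 t, h2 t, h3 t, h4 t, h5 t, Matrix.cons_val_succ] <;> rfl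
end

section
/- Let T > 0 and let Λ : ℝ × ℝ → ℝ⁶ be a C^∞ map such that Λ(0,α) = (0, −T, 0, 0, 1, α) for all α ∈ ℝ and ∂Λ/∂t(t,α) = V(Λ(t,α)) for all (t,α) ∈ ℝ². Then for every t ∈ ℝ, the derivatives in α at α = 0 of the p_x-component Λ₄ and of the x-component Λ₁ satisfy ∂Λ₄/∂α(t,0) = −∫₀ᵗ θ(τ − T) dτ and ∂Λ₁/∂α(t,0) = −∫₀ᵗ ∫₀ˢ θ(τ − T) dτ ds. In particular, ∂Λ₁/∂α(t,0) < 0 for every t > T. -/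
open intervalIntegral

/-- Clairaut-type swap: for a smooth `g : ℝ² → ℝ` whose `t`-partial derivative is `F`,
the function `s ↦ ∂_α g (s, 0)` has derivative `∂_α F (t, 0)` at `t`. -/
lemma deriv_swap_aux (g : ℝ × ℝ → ℝ) (hg : ContDiff ℝ (⊤ : ℕ∞) g) (F : ℝ × ℝ → ℝ)
    (hF : ∀ p : ℝ × ℝ, HasDerivAt (fun s => g (s, p.2)) (F p) p.1) (t : ℝ) :
    HasDerivAt (fun s => deriv (fun α => g (s, α)) 0) (deriv (fun α => F (t, α)) 0) t := by
  have hgd : Differentiable ℝ g := hg.differentiable (by simp)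
  set D := fderiv ℝ g with hD
  have hD1 : ContDiff ℝ 1 D := hg.fderiv_right (by exact WithTop.coe_le_coe.mpr le_top)
  have hvert : ∀ s α : ℝ, HasDerivAt (fun β : ℝ => (s, β)) ((0 : ℝ), (1 : ℝ)) α := by
    intro s α
    exact (hasDerivAt_const α s).prodMk (hasDerivAt_id α)
  have hhor : ∀ s α : ℝ, HasDerivAt (fun σ : ℝ => (σ, α)) ((1 : ℝ), (0 : ℝ)) s := by
    intro s α
    exact (hasDerivAt_id s).prodMk (hasDerivAt_const s α)
  have hval : ∀ s : ℝ, deriv (fun α => g (s, α)) 0 = D (s, 0) ((0 : ℝ), (1 : ℝ)) := by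
    intro s
    exact ((hgd (s, 0)).hasFDerivAt.comp_hasDerivAt 0 (hvert s 0)).deriv
  have hFval : ∀ p : ℝ × ℝ, F p = D p ((1 : ℝ), (0 : ℝ)) := by
    intro p
    have h1 : HasDerivAt (fun s => g (s, p.2)) (D p ((1 : ℝ), (0 : ℝ))) p.1 := by
      have := (hgd p).hasFDerivAt.comp_hasDerivAt p.1 (hhor p.1 p.2)
      exact this
    exact (hF p).unique h1
  have heval : ∀ v : ℝ × ℝ, ∀ p : ℝ × ℝ,
      HasFDerivAt (fun q => D q v)
        ((ContinuousLinearMap.apply ℝ ℝ v).comp (fderiv ℝ D p)) p := by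
    intro v p
    exact (ContinuousLinearMap.apply ℝ ℝ v).hasFDerivAt.comp p
      ((hD1.differentiable one_ne_zero p).hasFDerivAt)
  have hsymm : fderiv ℝ D (t, 0) ((1:ℝ),(0:ℝ)) ((0:ℝ),(1:ℝ))
      = fderiv ℝ D (t, 0) ((0:ℝ),(1:ℝ)) ((1:ℝ),(0:ℝ)) :=
    (hg.contDiffAt.isSymmSndFDerivAt (by simp [minSmoothness_of_isRCLikeNormedField]; exact WithTop.coe_le_coe.mpr le_top)) _ _
  have hrhs : deriv (fun α => F (t, α)) 0
      = fderiv ℝ D (t, 0) ((0:ℝ),(1:ℝ)) ((1:ℝ),(0:ℝ)) := by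
    have h1 : HasDerivAt (fun α => D (t, α) ((1:ℝ),(0:ℝ)))
        (fderiv ℝ D (t, 0) ((0:ℝ),(1:ℝ)) ((1:ℝ),(0:ℝ))) 0 := by
      have := (heval ((1:ℝ),(0:ℝ)) (t, 0)).comp_hasDerivAt 0 (hvert t 0)
      exact this
    have : (fun α => F (t, α)) = fun α => D (t, α) ((1:ℝ),(0:ℝ)) := by
      funext α; exact hFval (t, α)
    rw [this]; exact h1.deriv
  have h2 : HasDerivAt (fun s => D (s, 0) ((0:ℝ),(1:ℝ)))
      (fderiv ℝ D (t, 0) ((1:ℝ),(0:ℝ)) ((0:ℝ),(1:ℝ))) t := by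
    have := (heval ((0:ℝ),(1:ℝ)) (t, 0)).comp_hasDerivAt t (hhor t 0)
    exact this
  have : (fun s => deriv (fun α => g (s, α)) 0) = fun s => D (s, 0) ((0:ℝ),(1:ℝ)) := by
    funext s; exact hval s
  rw [this, hrhs, ← hsymm]
  exact h2

/-- Let `T > 0` and `Λ : ℝ × ℝ → ℝ⁶` be a smooth family of integral curves of the
Hamiltonian vector field `V` with `Λ(0,α) = (0, −T, 0, 0, 1, α)`. Then for all `t`,
`∂Λ₄/∂α (t,0) = −∫₀ᵗ θ(τ−T) dτ` and `∂Λ₁/∂α (t,0) = −∫₀ᵗ ∫₀ˢ θ(τ−T) dτ ds`;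
in particular `∂Λ₁/∂α (t,0) < 0` for every `t > T`. -/
theorem stmt_10 (θ : ℝ → ℝ) (hθ : ContDiff ℝ (⊤ : ℕ∞) θ) (hmono : Monotone θ)
    (hθ0 : ∀ t ≤ (0 : ℝ), θ t = 0) (hθpos : ∀ t > (0 : ℝ), 0 < θ t)
    (hθ1 : ∀ t ≥ (1 : ℝ), θ t = 1)
    (A B : ℝ → ℝ → ℝ)
    (hA : ∀ x y : ℝ, A x y = x * θ y + x ^ 2 * θ (1 - y))
    (hB : ∀ x y : ℝ, B x y = θ y + 2 * x * θ (1 - y))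
    (V : (Fin 6 → ℝ) → Fin 6 → ℝ)
    (hV : ∀ p : Fin 6 → ℝ, V p =
      ![p 3,
        p 4 + A (p 0) (p 1) * p 5,
        (p 4 + A (p 0) (p 1) * p 5) * A (p 0) (p 1),
        -(p 5) * (p 4 + A (p 0) (p 1) * p 5) * B (p 0) (p 1),
        -(p 5) * (p 4 + A (p 0) (p 1) * p 5) *
          (p 0 * deriv θ (p 1) - (p 0) ^ 2 * deriv θ (1 - p 1)),
        0])
    (T : ℝ) (hT : 0 < T)
    (Λ : ℝ × ℝ → Fin 6 → ℝ) (hΛ : ContDiff ℝ (⊤ : ℕ∞) Λ)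
    (hinit : ∀ α : ℝ, Λ (0, α) = ![0, -T, 0, 0, 1, α])
    (hode : ∀ t α : ℝ, HasDerivAt (fun s : ℝ => Λ (s, α)) (V (Λ (t, α))) t) :
    ∀ t : ℝ,
      deriv (fun α : ℝ => Λ (t, α) 3) 0 = -(∫ τ in (0 : ℝ)..t, θ (τ - T)) ∧
      deriv (fun α : ℝ => Λ (t, α) 0) 0
        = -(∫ s in (0 : ℝ)..t, ∫ τ in (0 : ℝ)..s, θ (τ - T)) ∧
      (T < t → deriv (fun α : ℝ => Λ (t, α) 0) 0 < 0) := by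
  have hθd : Differentiable ℝ θ := hθ.differentiable (by simp)
  have hΛd : Differentiable ℝ Λ := hΛ.differentiable (by simp)
  -- component formulas of V
  have hV0 : ∀ p, V p 0 = p 3 := fun p => by rw [hV]; rfl
  have hV1 : ∀ p, V p 1 = p 4 + A (p 0) (p 1) * p 5 := fun p => by rw [hV]; rfl
  have hV3 : ∀ p, V p 3 = -(p 5) * (p 4 + A (p 0) (p 1) * p 5) * B (p 0) (p 1) :=
    fun p => by rw [hV]; rfl
  have hV4 : ∀ p, V p 4 = -(p 5) * (p 4 + A (p 0) (p 1) * p 5) *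
      (p 0 * deriv θ (p 1) - (p 0) ^ 2 * deriv θ (1 - p 1)) := fun p => by rw [hV]; rfl
  have hV5 : ∀ p, V p 5 = 0 := fun p => by rw [hV]; rfl
  -- derivatives in t along α = 0
  have hdt : ∀ (t : ℝ) (i : Fin 6), HasDerivAt (fun s => Λ (s, 0) i) (V (Λ (t, 0)) i) t :=
    fun t i => hasDerivAt_pi.mp (hode t 0) i
  have hdiffc : ∀ i : Fin 6, Differentiable ℝ (fun s : ℝ => Λ (s, 0) i) :=
    fun i t => (hdt t i).differentiableAt
  -- the α = 0 curve is the straight line (0, t - T, 0, 0, 1, 0)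
  have hc5 : ∀ t : ℝ, Λ (t, 0) 5 = 0 := by
    intro t
    have hz : ∀ s : ℝ, deriv (fun s : ℝ => Λ (s, 0) 5) s = 0 := fun s => by
      rw [(hdt s 5).deriv, hV5]
    have hcon := is_const_of_deriv_eq_zero (hdiffc 5) hz t 0
    rw [hcon, hinit]; rfl
  have hc3 : ∀ t : ℝ, Λ (t, 0) 3 = 0 := by
    intro t
    have hz : ∀ s : ℝ, deriv (fun s : ℝ => Λ (s, 0) 3) s = 0 := fun s => by
      rw [(hdt s 3).deriv, hV3, hc5 s]; ring
    have hcon := is_const_of_deriv_eq_zero (hdiffc 3) hz t 0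
    rw [hcon, hinit]; rfl
  have hc4 : ∀ t : ℝ, Λ (t, 0) 4 = 1 := by
    intro t
    have hz : ∀ s : ℝ, deriv (fun s : ℝ => Λ (s, 0) 4) s = 0 := fun s => by
      rw [(hdt s 4).deriv, hV4, hc5 s]; ring
    have hcon := is_const_of_deriv_eq_zero (hdiffc 4) hz t 0
    rw [hcon, hinit]; rfl
  have hc0 : ∀ t : ℝ, Λ (t, 0) 0 = 0 := by
    intro t
    have hz : ∀ s : ℝ, deriv (fun s : ℝ => Λ (s, 0) 0) s = 0 := fun s => by
      rw [(hdt s 0).deriv, hV0, hc3 s]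
    have hcon := is_const_of_deriv_eq_zero (hdiffc 0) hz t 0
    rw [hcon, hinit]; rfl
  have hc1 : ∀ t : ℝ, Λ (t, 0) 1 = t - T := by
    have hd : ∀ s : ℝ, HasDerivAt (fun s : ℝ => Λ (s, 0) 1 - s) (V (Λ (s, 0)) 1 - 1) s :=
      fun s => (hdt s 1).sub (hasDerivAt_id s)
    have hz : ∀ s : ℝ, deriv (fun s : ℝ => Λ (s, 0) 1 - s) s = 0 := by
      intro s
      rw [(hd s).deriv, hV1, hc4 s, hc5 s]; ring
    intro t
    have hcon := is_const_of_deriv_eq_zero (fun s => (hd s).differentiableAt) hz t 0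
    have h0 : Λ ((0 : ℝ), (0 : ℝ)) 1 = -T := by rw [hinit]; rfl
    rw [h0] at hcon
    linarith [hcon]
  -- differentiability in α
  have hdiffα : ∀ (i : Fin 6) (t : ℝ), DifferentiableAt ℝ (fun α : ℝ => Λ (t, α) i) 0 := by
    intro i t
    exact ((differentiableAt_pi.mp (hΛd (t, 0))) i).comp 0
      ((differentiableAt_const t).prodMk differentiableAt_id)
  -- the variational equation, via the Clairaut swap
  have hu : ∀ (i : Fin 6) (t : ℝ),
      HasDerivAt (fun s : ℝ => deriv (fun α : ℝ => Λ (s, α) i) 0)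
        (deriv (fun α : ℝ => V (Λ (t, α)) i) 0) t := by
    intro i t
    exact deriv_swap_aux (fun p => Λ p i) (contDiff_pi.mp hΛ i)
      (fun p => V (Λ p) i) (fun p => hasDerivAt_pi.mp (hode p.1 p.2) i) t
  -- initial values of the variation
  have hu5_0 : deriv (fun α : ℝ => Λ ((0 : ℝ), α) 5) 0 = 1 := by
    have h : (fun α : ℝ => Λ ((0 : ℝ), α) 5) = fun α : ℝ => α := by
      funext α; rw [hinit]; rfl
    rw [h, deriv_id'']
  have hu3_0 : deriv (fun α : ℝ => Λ ((0 : ℝ), α) 3) 0 = 0 := by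
    have h : (fun α : ℝ => Λ ((0 : ℝ), α) 3) = fun _ : ℝ => (0 : ℝ) := by
      funext α; rw [hinit]; rfl
    rw [h, deriv_const]
  have hu0_0 : deriv (fun α : ℝ => Λ ((0 : ℝ), α) 0) 0 = 0 := by
    have h : (fun α : ℝ => Λ ((0 : ℝ), α) 0) = fun _ : ℝ => (0 : ℝ) := by
      funext α; rw [hinit]; rfl
    rw [h, deriv_const]
  -- the 5th variation is constant equal to 1
  have hu5d : ∀ t : ℝ, HasDerivAt (fun s : ℝ => deriv (fun α : ℝ => Λ (s, α) 5) 0) 0 t := by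
    intro t
    have h : HasDerivAt (fun s : ℝ => deriv (fun α : ℝ => Λ (s, α) 5) 0)
        (deriv (fun α : ℝ => V (Λ (t, α)) 5) 0) t := hu 5 t
    have he : (fun α : ℝ => V (Λ (t, α)) 5) = fun _ : ℝ => (0 : ℝ) := by
      funext α; rw [hV5]
    rwa [he, deriv_const] at h
  have hu5 : ∀ t : ℝ, deriv (fun α : ℝ => Λ (t, α) 5) 0 = 1 := by
    intro t
    have hcon := is_const_of_deriv_eq_zero (fun s => (hu5d s).differentiableAt)
      (fun s => (hu5d s).deriv) t 0
    rw [hcon, hu5_0]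
  have h5' : ∀ t : ℝ, HasDerivAt (fun α : ℝ => Λ (t, α) 5) 1 0 := by
    intro t
    have h := (hdiffα 5 t).hasDerivAt
    rwa [hu5 t] at h
  -- α-derivative of the 3rd component of V ∘ Λ at α = 0
  have hF3 : ∀ t : ℝ, deriv (fun α : ℝ => V (Λ (t, α)) 3) 0 = -θ (t - T) := by
    intro t
    have heq : (fun α : ℝ => V (Λ (t, α)) 3)
        = fun α : ℝ => -(Λ (t, α) 5) *
            ((Λ (t, α) 4 + (Λ (t, α) 0 * θ (Λ (t, α) 1)
              + (Λ (t, α) 0) ^ 2 * θ (1 - Λ (t, α) 1)) * Λ (t, α) 5) *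
             (θ (Λ (t, α) 1) + 2 * Λ (t, α) 0 * θ (1 - Λ (t, α) 1))) := by
      funext α; rw [hV3, hA, hB]; ring
    rw [heq]
    have d0 := hdiffα 0 t
    have d1 := hdiffα 1 t
    have d4 := hdiffα 4 t
    have d5 := hdiffα 5 t
    have dθ1 : DifferentiableAt ℝ (fun α : ℝ => θ (Λ (t, α) 1)) 0 :=
      (hθd _).comp 0 d1
    have dθ2 : DifferentiableAt ℝ (fun α : ℝ => θ (1 - Λ (t, α) 1)) 0 :=
      (hθd _).comp 0 ((differentiableAt_const 1).sub d1)
    have hG2 : DifferentiableAt ℝ (fun α : ℝ =>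
        (Λ (t, α) 4 + (Λ (t, α) 0 * θ (Λ (t, α) 1)
          + (Λ (t, α) 0) ^ 2 * θ (1 - Λ (t, α) 1)) * Λ (t, α) 5) *
        (θ (Λ (t, α) 1) + 2 * Λ (t, α) 0 * θ (1 - Λ (t, α) 1))) 0 :=
      ((d4.add (((d0.mul dθ1).add ((d0.pow 2).mul dθ2)).mul d5))).mul
        (dθ1.add (((differentiableAt_const 2).mul d0).mul dθ2))
    have hG1 : HasDerivAt (fun α : ℝ => -(Λ (t, α) 5)) (-1) 0 := (h5' t).neg
    have hprod := hG1.mul hG2.hasDerivAt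
    erw [hprod.deriv]; rw [hc5 t, hc4 t, hc0 t, hc1 t]
    ring
  -- variational ODE for component 3
  have hu3d : ∀ t : ℝ, HasDerivAt (fun s : ℝ => deriv (fun α : ℝ => Λ (s, α) 3) 0)
      (-θ (t - T)) t := by
    intro t
    have h : HasDerivAt (fun s : ℝ => deriv (fun α : ℝ => Λ (s, α) 3) 0)
        (deriv (fun α : ℝ => V (Λ (t, α)) 3) 0) t := hu 3 t
    rwa [hF3 t] at h
  -- the first integral
  have hcontθ : Continuous (fun τ : ℝ => θ (τ - T)) :=
    hθ.continuous.comp (continuous_id.sub continuous_const)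
  have hI1 : ∀ t : ℝ, HasDerivAt (fun s : ℝ => ∫ τ in (0 : ℝ)..s, θ (τ - T)) (θ (t - T)) t :=
    fun t => (hcontθ.integral_hasStrictDerivAt 0 t).hasDerivAt
  have key3 : ∀ t : ℝ, deriv (fun α : ℝ => Λ (t, α) 3) 0 = -(∫ τ in (0 : ℝ)..t, θ (τ - T)) := by
    have hsum : ∀ t : ℝ, HasDerivAt (fun s : ℝ =>
        deriv (fun α : ℝ => Λ (s, α) 3) 0 + ∫ τ in (0 : ℝ)..s, θ (τ - T)) 0 t := by
      intro t
      have h := (hu3d t).add (hI1 t)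
      simpa [Pi.add_def] using h
    intro t
    have hcon := is_const_of_deriv_eq_zero (fun s => (hsum s).differentiableAt)
      (fun s => (hsum s).deriv) t 0
    rw [intervalIntegral.integral_same, hu3_0] at hcon
    linarith [hcon]
  -- variational ODE for component 0
  have hu0d : ∀ t : ℝ, HasDerivAt (fun s : ℝ => deriv (fun α : ℝ => Λ (s, α) 0) 0)
      (-(∫ τ in (0 : ℝ)..t, θ (τ - T))) t := by
    intro t
    have h : HasDerivAt (fun s : ℝ => deriv (fun α : ℝ => Λ (s, α) 0) 0)
        (deriv (fun α : ℝ => V (Λ (t, α)) 0) 0) t := hu 0 t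
    have he : (fun α : ℝ => V (Λ (t, α)) 0) = fun α : ℝ => Λ (t, α) 3 := by
      funext α; rw [hV0]
    rw [he, key3 t] at h
    exact h
  -- the second integral
  have hI1c : Continuous (fun s : ℝ => ∫ τ in (0 : ℝ)..s, θ (τ - T)) := by
    rw [continuous_iff_continuousAt]
    exact fun t => (hI1 t).continuousAt
  have hI2 : ∀ t : ℝ, HasDerivAt
      (fun s : ℝ => ∫ σ in (0 : ℝ)..s, ∫ τ in (0 : ℝ)..σ, θ (τ - T))
      (∫ τ in (0 : ℝ)..t, θ (τ - T)) t :=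
    fun t => (hI1c.integral_hasStrictDerivAt 0 t).hasDerivAt
  have key0 : ∀ t : ℝ, deriv (fun α : ℝ => Λ (t, α) 0) 0
      = -(∫ s in (0 : ℝ)..t, ∫ τ in (0 : ℝ)..s, θ (τ - T)) := by
    have hsum : ∀ t : ℝ, HasDerivAt (fun s : ℝ =>
        deriv (fun α : ℝ => Λ (s, α) 0) 0 + ∫ σ in (0 : ℝ)..s, ∫ τ in (0 : ℝ)..σ, θ (τ - T)) 0 t := by
      intro t
      have h := (hu0d t).add (hI2 t)
      simpa [Pi.add_def] using h
    intro t
    have hcon := is_const_of_deriv_eq_zero (fun s => (hsum s).differentiableAt)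
      (fun s => (hsum s).deriv) t 0
    rw [intervalIntegral.integral_same, hu0_0] at hcon
    linarith [hcon]
  -- positivity
  have hθnn : ∀ x : ℝ, 0 ≤ θ x := by
    intro x
    rcases le_or_gt x 0 with h | h
    · rw [hθ0 x h]
    · exact (hθpos x h).le
  have hI1pos : ∀ s : ℝ, T < s → 0 < ∫ τ in (0 : ℝ)..s, θ (τ - T) := by
    intro s hs
    have hsplit : (∫ τ in (0 : ℝ)..T, θ (τ - T)) + (∫ τ in T..s, θ (τ - T))
        = ∫ τ in (0 : ℝ)..s, θ (τ - T) :=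
      intervalIntegral.integral_add_adjacent_intervals
        (hcontθ.intervalIntegrable _ _) (hcontθ.intervalIntegrable _ _)
    have h1 : 0 ≤ ∫ τ in (0 : ℝ)..T, θ (τ - T) :=
      intervalIntegral.integral_nonneg hT.le (fun u _ => hθnn _)
    have h2 : 0 < ∫ τ in T..s, θ (τ - T) :=
      intervalIntegral_pos_of_pos_on (hcontθ.intervalIntegrable _ _)
        (fun x hx => hθpos _ (by linarith [hx.1])) hs
    linarith
  have hI2pos : ∀ t : ℝ, T < t → 0 < ∫ s in (0 : ℝ)..t, ∫ τ in (0 : ℝ)..s, θ (τ - T) := by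
    intro t ht
    have hsplit : (∫ s in (0 : ℝ)..T, ∫ τ in (0 : ℝ)..s, θ (τ - T))
        + (∫ s in T..t, ∫ τ in (0 : ℝ)..s, θ (τ - T))
        = ∫ s in (0 : ℝ)..t, ∫ τ in (0 : ℝ)..s, θ (τ - T) :=
      intervalIntegral.integral_add_adjacent_intervals
        (hI1c.intervalIntegrable _ _) (hI1c.intervalIntegrable _ _)
    have h1 : 0 ≤ ∫ s in (0 : ℝ)..T, ∫ τ in (0 : ℝ)..s, θ (τ - T) :=
      intervalIntegral.integral_nonneg hT.le
        (fun u hu => intervalIntegral.integral_nonneg hu.1 (fun x _ => hθnn _))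
    have h2 : 0 < ∫ s in T..t, ∫ τ in (0 : ℝ)..s, θ (τ - T) :=
      intervalIntegral_pos_of_pos_on (hI1c.intervalIntegrable _ _)
        (fun s hs => hI1pos s hs.1) ht
    linarith
  -- conclusion
  intro t
  refine ⟨key3 t, key0 t, fun ht => ?_⟩
  rw [key0 t]
  have := hI2pos t ht
  linarith
end
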